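/- Let F be a class of non-negative measurable functions on 𝒳, X, X_1, …, X_n i.i.d. 𝒳-valued random variables with sup_{f∈F} Var(f(X)) ≤ v, α > 0 with α²v ≤ 1, δ ∈ (0,1), and set A_α(δ) = αv + 2log(1/δ)/(nα) and μ_0 = m_{f*} + A_α(δ). On the event that |μ̂_{f*} − m_{f*}| ≤ A_α(δ), the following three inequalities hold: (1) r̂_{f̂}(μ_0) ≤ 0; (2) r̄_{f*}(μ_0) ≤ 0; (3) −r̂_{f*}(μ_0) ≤ 2 A_α(δ). -/

import Mathlib

/-!
Catoni's `φ` is odd, non-decreasing and 1-Lipschitz, and `φ x ≤ log (1 + x + x²/2) ≤ x + x²/2`.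
Hence `μ ↦ r̂_f(μ)` is non-increasing and 1-Lipschitz and vanishes at `μ̂_f`. On the event,
`μ̂_{f̂} ≤ μ̂_{f*} ≤ μ₀`, which gives (1), and `μ₀ - μ̂_{f*} ≤ 2A`, which gives (3).
For (2), `r̄_{f*}` is non-increasing and `A ≥ αv`, while integrating `φ x ≤ x + x²/2` gives
`α r̄_{f*}(m + αv) ≤ -α²v + α²(Var + α²v²)/2 ≤ α²v(α²v - 1)/2 ≤ 0`.
-/

open MeasureTheory ProbabilityTheory Real

noncomputable section

/-- Catoni's truncation function `φ`. -/
def catoniPhi (x : ℝ) : ℝ :=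
  if x < 0 then -Real.log (1 - x + x ^ 2 / 2) else Real.log (1 + x + x ^ 2 / 2)

/-- Catoni's empirical criterion `r̂_f(μ)` based on the sample `Xs`. -/
def rhat {Ω 𝒳 : Type*} (n : ℕ) (α : ℝ) (Xs : Fin n → Ω → 𝒳)
    (f : 𝒳 → ℝ) (μ : ℝ) (ω : Ω) : ℝ :=
  (1 / (n * α)) * ∑ l, catoniPhi (α * (f (Xs l ω) - μ))

/-- The deterministic counterpart `r̄_f(μ)` of Catoni's criterion. -/
def rbar {Ω 𝒳 : Type*} [MeasurableSpace Ω] (P : Measure Ω)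
    (α : ℝ) (X : Ω → 𝒳) (f : 𝒳 → ℝ) (μ : ℝ) : ℝ :=
  (1 / α) * ∫ ω, catoniPhi (α * (f (X ω) - μ)) ∂P

lemma one_add_add_sq_div_two_pos (x : ℝ) : 0 < 1 + x + x ^ 2 / 2 := by
  nlinarith [sq_nonneg (x + 1)]

lemma catoniPhi_of_nonneg {x : ℝ} (hx : 0 ≤ x) : catoniPhi x = log (1 + x + x ^ 2 / 2) :=
  if_neg hx.not_gt

lemma catoniPhi_zero : catoniPhi 0 = 0 := by
  simp [catoniPhi_of_nonneg le_rfl]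

lemma catoniPhi_neg (x : ℝ) : catoniPhi (-x) = -catoniPhi x := by
  rcases lt_trichotomy x 0 with hx | rfl | hx
  · rw [catoniPhi_of_nonneg (neg_nonneg.2 hx.le), catoniPhi, if_pos hx]
    ring_nf
  · simp [catoniPhi_zero]
  · rw [catoniPhi_of_nonneg hx.le, catoniPhi, if_pos (neg_neg_of_pos hx)]
    ring_nf

lemma catoniPhi_le_log (x : ℝ) : catoniPhi x ≤ log (1 + x + x ^ 2 / 2) := by
  rcases lt_or_ge x 0 with hx | hx
  · rw [catoniPhi, if_pos hx, neg_le_iff_add_nonneg,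
      ← log_mul (one_add_add_sq_div_two_pos x).ne' (by nlinarith [sq_nonneg (x - 1)])]
    -- `(1 + x + x²/2)(1 - x + x²/2) = 1 + x⁴/4`
    exact log_nonneg (by nlinarith [sq_nonneg (x ^ 2)])
  · exact (catoniPhi_of_nonneg hx).le

lemma catoniPhi_le_add_sq_div_two (x : ℝ) : catoniPhi x ≤ x + x ^ 2 / 2 := by
  linarith [catoniPhi_le_log x, log_le_sub_one_of_pos (one_add_add_sq_div_two_pos x)]

lemma catoniPhi_add_le {x t : ℝ} (hx : 0 ≤ x) (ht : 0 ≤ t) :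
    catoniPhi (x + t) ≤ catoniPhi x + t := by
  have hq := one_add_add_sq_div_two_pos
  rw [catoniPhi_of_nonneg (add_nonneg hx ht), catoniPhi_of_nonneg hx]
  -- the product exceeds the left side by `xt(x + t)/2 + x²t²/4`
  have hsplit : 1 + (x + t) + (x + t) ^ 2 / 2 ≤ (1 + x + x ^ 2 / 2) * (1 + t + t ^ 2 / 2) := by
    nlinarith [mul_nonneg (mul_nonneg hx ht) (add_nonneg hx ht), sq_nonneg (x * t)]
  calc log (1 + (x + t) + (x + t) ^ 2 / 2)
      ≤ log ((1 + x + x ^ 2 / 2) * (1 + t + t ^ 2 / 2)) := log_le_log (hq _) hsplit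
    _ ≤ log ((1 + x + x ^ 2 / 2) * exp t) :=
        log_le_log (mul_pos (hq x) (hq t))
          (mul_le_mul_of_nonneg_left (quadratic_le_exp_of_nonneg ht) (hq x).le)
    _ = log (1 + x + x ^ 2 / 2) + t := by rw [log_mul (hq x).ne' (exp_pos t).ne', log_exp]

lemma catoniPhi_monotone : Monotone catoniPhi := by
  refine monotone_of_odd_of_monotoneOn_nonneg catoniPhi_neg fun x hx y hy hxy => ?_
  rw [catoniPhi_of_nonneg hx, catoniPhi_of_nonneg hy]
  exact log_le_log (one_add_add_sq_div_two_pos x) (by nlinarith [Set.mem_Ici.1 hx])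

lemma monotone_sub_catoniPhi : Monotone fun x => x - catoniPhi x := by
  refine monotone_of_odd_of_monotoneOn_nonneg (fun x => by simp only [catoniPhi_neg]; ring)
    fun x hx y _ hxy => ?_
  have := catoniPhi_add_le hx (sub_nonneg.2 hxy)
  rw [add_sub_cancel] at this
  linarith

lemma catoniPhi_lipschitzWith : LipschitzWith 1 catoniPhi := by
  refine LipschitzWith.of_le_add_mul 1 fun x y => ?_
  rw [NNReal.coe_one, one_mul, Real.dist_eq]
  rcases le_total x y with h | h
  · linarith [catoniPhi_monotone h, abs_nonneg (x - y)]
  · linarith [monotone_sub_catoniPhi h, le_abs_self (x - y)]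

section Criteria

variable {Ω 𝒳 : Type*}

lemma rhat_antitone (n : ℕ) {α : ℝ} (hα : 0 ≤ α) (Xs : Fin n → Ω → 𝒳)
    (f : 𝒳 → ℝ) (ω : Ω) :
    Antitone fun μ => rhat n α Xs f μ ω := by
  intro μ μ' h
  dsimp only [rhat]
  gcongr with l
  exact catoniPhi_monotone (by nlinarith)

lemma rhat_sub_rhat_le {n : ℕ} (hn : 0 < n) {α : ℝ} (hα : 0 < α) (Xs : Fin n → Ω → 𝒳)
    (f : 𝒳 → ℝ) (ω : Ω) {μ μ' : ℝ} (h : μ ≤ μ') :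
    rhat n α Xs f μ ω - rhat n α Xs f μ' ω ≤ μ' - μ := by
  have hterm : ∀ l, catoniPhi (α * (f (Xs l ω) - μ)) - catoniPhi (α * (f (Xs l ω) - μ'))
      ≤ α * (μ' - μ) := fun l => by
    have := monotone_sub_catoniPhi
      (show α * (f (Xs l ω) - μ') ≤ α * (f (Xs l ω) - μ) by nlinarith)
    linarith
  calc rhat n α Xs f μ ω - rhat n α Xs f μ' ω
      = 1 / (n * α) *
          ∑ l, (catoniPhi (α * (f (Xs l ω) - μ)) - catoniPhi (α * (f (Xs l ω) - μ'))) := by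
        rw [rhat, rhat, ← mul_sub, ← Finset.sum_sub_distrib]
    _ ≤ 1 / (n * α) * ∑ _l : Fin n, α * (μ' - μ) := by gcongr with l; exact hterm l
    _ = μ' - μ := by
        rw [Finset.sum_const, Finset.card_univ, Fintype.card_fin, nsmul_eq_mul]
        field_simp

variable [MeasurableSpace Ω] {P : Measure Ω}

lemma MeasureTheory.Integrable.catoniPhi_comp {Z : Ω → ℝ} (hZ : Integrable Z P) :
    Integrable (fun ω => catoniPhi (Z ω)) P :=
  memLp_one_iff_integrable.1 <|
    catoniPhi_lipschitzWith.comp_memLp catoniPhi_zero (memLp_one_iff_integrable.2 hZ)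

lemma integral_catoniPhi_le [IsProbabilityMeasure P] {Z : Ω → ℝ} (hZ : MemLp Z 2 P) :
    ∫ ω, catoniPhi (Z ω) ∂P ≤ P[Z] + (Var[Z; P] + P[Z] ^ 2) / 2 := by
  have hZ1 := hZ.integrable one_le_two
  calc ∫ ω, catoniPhi (Z ω) ∂P ≤ ∫ ω, (Z ω + Z ω ^ 2 / 2) ∂P :=
        integral_mono hZ1.catoniPhi_comp (hZ1.add (hZ.integrable_sq.div_const 2))
          fun ω => catoniPhi_le_add_sq_div_two (Z ω)
    _ = P[Z] + (Var[Z; P] + P[Z] ^ 2) / 2 := by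
        rw [integral_add hZ1 (hZ.integrable_sq.div_const 2), integral_div, variance_eq_sub hZ]
        simp

variable {X : Ω → 𝒳} {f : 𝒳 → ℝ} {α : ℝ}

lemma rbar_antitone [IsFiniteMeasure P] (hα : 0 ≤ α) (hf : Integrable (fun ω => f (X ω)) P) :
    Antitone (rbar P α X f) := by
  have hint : ∀ μ, Integrable (fun ω => catoniPhi (α * (f (X ω) - μ))) P := fun μ =>
    ((hf.sub (integrable_const μ)).const_mul α).catoniPhi_comp
  intro μ μ' h
  unfold rbar
  gcongr 1 / α * ?_
  exact integral_mono (hint μ') (hint μ) fun ω => catoniPhi_monotone (by nlinarith)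

lemma rbar_nonpos [IsProbabilityMeasure P] (hα : 0 < α) {v : ℝ}
    (hf : MemLp (fun ω => f (X ω)) 2 P) (hvar : Var[fun ω => f (X ω); P] ≤ v)
    (hαv : α ^ 2 * v ≤ 1) :
    rbar P α X f (P[fun ω => f (X ω)] + α * v) ≤ 0 := by
  set m := P[fun ω => f (X ω)]
  have hZ : MemLp (fun ω => α * (f (X ω) - (m + α * v))) 2 P :=
    (hf.sub (memLp_const _)).const_mul α
  have hmean : P[fun ω => α * (f (X ω) - (m + α * v))] = -(α ^ 2 * v) := by
    rw [integral_const_mul, integral_sub (hf.integrable one_le_two) (integrable_const _),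
      integral_const]
    simp [m]
    ring
  have hVar : Var[fun ω => α * (f (X ω) - (m + α * v)); P] =
      α ^ 2 * Var[fun ω => f (X ω); P] := by
    rw [variance_const_mul, variance_sub_const hf.aestronglyMeasurable]
  have hv : 0 ≤ v := (variance_nonneg _ _).trans hvar
  have hI := integral_catoniPhi_le hZ
  rw [hmean, hVar] at hI
  unfold rbar
  refine mul_nonpos_of_nonneg_of_nonpos (by positivity) (hI.trans ?_)
  -- `-α²v + (α²v + α⁴v²)/2 = α²v (α²v - 1)/2`
  nlinarith [mul_le_mul_of_nonneg_left hvar (sq_nonneg α),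
    mul_nonneg (mul_nonneg (sq_nonneg α) hv) (sub_nonneg.2 hαv)]

end Criteria

theorem stmt_5_general {Ω 𝒳 ι : Type*} [MeasurableSpace Ω]
    (P : Measure Ω) [IsProbabilityMeasure P]
    (n : ℕ) (hn : 0 < n) (X : Ω → 𝒳) (Xs : Fin n → Ω → 𝒳)
    (f : ι → 𝒳 → ℝ)
    (hfL2 : ∀ i, MemLp (fun ω => f i (X ω)) 2 P)
    (v : ℝ) (hvar : ∀ i, variance (fun ω => f i (X ω)) P ≤ v)
    (α : ℝ) (hα : 0 < α) (hαv : α ^ 2 * v ≤ 1)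
    (δ : ℝ) (hδ : δ ∈ Set.Ioo (0 : ℝ) 1)
    (muHat : ι → Ω → ℝ) (hroot : ∀ i ω, rhat n α Xs (f i) (muHat i ω) ω = 0)
    (fhat : Ω → ι) (hminhat : ∀ ω i, muHat (fhat ω) ω ≤ muHat i ω)
    (istar : ι)
    (ω : Ω)
    (hevent : |muHat istar ω - ∫ ω', f istar (X ω') ∂P| ≤
      α * v + 2 * Real.log (1 / δ) / (n * α)) :
    rhat n α Xs (f (fhat ω))
        ((∫ ω', f istar (X ω') ∂P) + (α * v + 2 * Real.log (1 / δ) / (n * α))) ω ≤ 0 ∧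
    rbar P α X (f istar)
        ((∫ ω', f istar (X ω') ∂P) + (α * v + 2 * Real.log (1 / δ) / (n * α))) ≤ 0 ∧
    -(rhat n α Xs (f istar)
        ((∫ ω', f istar (X ω') ∂P) + (α * v + 2 * Real.log (1 / δ) / (n * α))) ω) ≤
      2 * (α * v + 2 * Real.log (1 / δ) / (n * α)) := by
  set m := ∫ ω', f istar (X ω') ∂P
  set A := α * v + 2 * Real.log (1 / δ) / (n * α)
  have hA : α * v ≤ A := by
    have := log_nonneg (one_le_one_div hδ.1 hδ.2.le)
    simp only [A, le_add_iff_nonneg_right]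
    positivity
  obtain ⟨hlower, hupper⟩ := abs_le.1 hevent
  refine ⟨?_, ?_, ?_⟩
  · calc rhat n α Xs (f (fhat ω)) (m + A) ω
          ≤ rhat n α Xs (f (fhat ω)) (muHat (fhat ω) ω) ω :=
            rhat_antitone n hα.le Xs _ ω (by linarith [hminhat ω istar])
      _ = 0 := hroot _ ω
  · exact (rbar_antitone hα.le ((hfL2 istar).integrable one_le_two) (by linarith)).trans
      (rbar_nonpos hα (hfL2 istar) (hvar istar) hαv)
  · have := rhat_sub_rhat_le hn hα Xs (f istar) ω (show muHat istar ω ≤ m + A by linarith)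
    linarith [hroot istar ω]

/-- Lemma 3.2: on the event `|μ̂_{f*} - m_{f*}| ≤ A_α(δ)`, with `μ₀ = m_{f*} + A_α(δ)`,
one has `r̂_{f̂}(μ₀) ≤ 0`, `r̄_{f*}(μ₀) ≤ 0` and `-r̂_{f*}(μ₀) ≤ 2 A_α(δ)`. -/
theorem stmt_5 {Ω 𝒳 ι : Type*} [MeasurableSpace Ω] [MeasurableSpace 𝒳]
    (P : Measure Ω) [IsProbabilityMeasure P]
    (n : ℕ) (hn : 0 < n) (X : Ω → 𝒳) (Xs : Fin n → Ω → 𝒳)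
    (hXm : Measurable X) (hXsm : ∀ l, Measurable (Xs l))
    (hindep : iIndepFun Xs P)
    (hident : ∀ l, Measure.map (Xs l) P = Measure.map X P)
    (f : ι → 𝒳 → ℝ) (hfm : ∀ i, Measurable (f i)) (hf0 : ∀ i x, 0 ≤ f i x)
    (hfL2 : ∀ i, MemLp (fun ω => f i (X ω)) 2 P)
    (v : ℝ) (hv : 0 < v) (hvar : ∀ i, variance (fun ω => f i (X ω)) P ≤ v)
    (α : ℝ) (hα : 0 < α) (hαv : α ^ 2 * v ≤ 1)
    (δ : ℝ) (hδ : δ ∈ Set.Ioo (0 : ℝ) 1)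
    (muHat : ι → Ω → ℝ) (hroot : ∀ i ω, rhat n α Xs (f i) (muHat i ω) ω = 0)
    (fhat : Ω → ι) (hminhat : ∀ ω i, muHat (fhat ω) ω ≤ muHat i ω)
    (istar : ι) (histar : ∀ i, ∫ ω, f istar (X ω) ∂P ≤ ∫ ω, f i (X ω) ∂P)
    (ω : Ω)
    (hevent : |muHat istar ω - ∫ ω', f istar (X ω') ∂P| ≤
      α * v + 2 * Real.log (1 / δ) / (n * α)) :
    rhat n α Xs (f (fhat ω))
        ((∫ ω', f istar (X ω') ∂P) + (α * v + 2 * Real.log (1 / δ) / (n * α))) ω ≤ 0 ∧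
    rbar P α X (f istar)
        ((∫ ω', f istar (X ω') ∂P) + (α * v + 2 * Real.log (1 / δ) / (n * α))) ≤ 0 ∧
    -(rhat n α Xs (f istar)
        ((∫ ω', f istar (X ω') ∂P) + (α * v + 2 * Real.log (1 / δ) / (n * α))) ω) ≤
      2 * (α * v + 2 * Real.log (1 / δ) / (n * α)) :=
  stmt_5_general P n hn X Xs f hfL2 v hvar α hα hαv δ hδ muHat hroot fhat hminhat istar ω hevent
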